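/- Let π : X → Y be a factor map between topological dynamical systems (X,T,ℤ^d) and (Y,S,ℤ^d), and assume π is not bounded to one. Then every closed half-space H ⊆ ℝ^d (a set of the form {x ∈ ℝ^d : ⟨x,c⟩ ≥ 0} for some nonzero c ∈ ℝ^d) contains a π-nondeterministic vector, i.e. ND_{ℓ²}(X,π) ∩ H ≠ ∅. -/

import Mathlib

open Metric Filter Topology

/-- The open half-space (`ℓ²` horoball) of `ℤ^d` with outward normal vector `v`. -/
def halfSpaceZ {d : ℕ} (v : EuclideanSpace ℝ (Fin d)) : Set (Fin d → ℤ) :=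
  {g | ∑ i, (g i : ℝ) * v i < 0}

/-- The set `ND_{ℓ²}(X,ε,π)` of unit vectors `v` whose half-space `H_v` is
`(ε,π)`-nonexpansive. -/
def NDl2 {d : ℕ} {X Y : Type*} [MetricSpace X] (T : (Fin d → ℤ) → X → X) (π : X → Y)
    (ε : ℝ) : Set (EuclideanSpace ℝ (Fin d)) :=
  {v | ‖v‖ = 1 ∧ ∃ x y : X, x ≠ y ∧ π x = π y ∧
    ∀ g ∈ halfSpaceZ v, dist (T g x) (T g y) ≤ ε}

/-- A map is bounded to one if the cardinalities of its fibers are uniformly bounded. -/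
def BoundedToOne {X Y : Type*} (π : X → Y) : Prop :=
  ∃ n : ℕ, ∀ (y : Y) (s : Finset X), (∀ x ∈ s, π x = y) → s.card ≤ n

open scoped RealInnerProductSpace

/-!
Fix `ε > 0` and a unit vector `z`. If two distinct points of a fibre stay `ε`-close along the
whole orbit, every unit vector is `ε`-nondeterministic. Otherwise, since `π` is not bounded to
one, compactness and uniform continuity give a finite family in one fibre such that every ball
of radius `Λ` in `ℝ^d` carries a pair of the family that is `ε`-close on it. Walk along the ray
`s ↦ -s z`: as long as the nearest time at which a pair separates lies at distance `≥ Λ/2` and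
points against `z`, the squared distance to it drops by `1` per step. This cannot go on for
every pair, so some pair has a separation-free ball of radius `ρ ≥ Λ/2` whose nearest separation
time `t` lies in a direction `u` with `⟪u, z⟫ ≥ -2/Λ`. Shifted by `t`, that pair is `ε`-close on
the part of the half-space `⟪·, u⟫ < -1` of norm `< √Λ`. Letting `Λ → ∞` (Cantor's intersection
theorem on a compact space of witness triples) yields an `ε`-nondeterministic `v` with
`⟪v, z⟫ ≥ 0`. Finally, the sets `ND(ε)` are closed and decrease with `ε`, so Cantor's
intersection theorem on the closed hemisphere gives a common vector.
-/

lemma norm_add_lt_norm_of_inner_le {E : Type*} [NormedAddCommGroup E] [InnerProductSpace ℝ E]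
    {g w : E} (hgw : ⟪g, w⟫ ≤ -‖w‖) (hg : ‖g‖ ^ 2 < 2 * ‖w‖) : ‖g + w‖ < ‖w‖ := by
  refine lt_of_pow_lt_pow_left₀ 2 (norm_nonneg w) ?_
  rw [norm_add_sq_real]
  linarith

lemma exists_forall_ge_le_add_one_of_sq_descent {r : ℕ → ℝ} {a : ℝ} (hr : ∀ m, 0 ≤ r m)
    (hdesc : ∀ m, a ≤ r m → r (m + 1) ^ 2 ≤ r m ^ 2 - 1) (hlip : ∀ m, r (m + 1) ≤ r m + 1) :
    ∃ m₀, ∀ m ≥ m₀, r m ≤ a + 1 := by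
  obtain ⟨m₀, hm₀⟩ : ∃ m₀, r m₀ < a := by
    by_contra! h
    have hsq : ∀ m : ℕ, r m ^ 2 ≤ r 0 ^ 2 - m := fun m => by
      induction m with
      | zero => simp
      | succ n ih => push_cast; linarith [hdesc n (h n)]
    obtain ⟨m, hm⟩ := exists_nat_gt (r 0 ^ 2)
    nlinarith [hsq m, sq_nonneg (r m)]
  refine ⟨m₀, fun m hm => ?_⟩
  induction m, hm using Nat.le_induction with
  | base => linarith
  | succ n _ ih =>
    by_cases h : a ≤ r n
    · nlinarith [hdesc n h, hr n, hr (n + 1)]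
    · linarith [hlip n]

section Lattice

variable {d : ℕ}

noncomputable def latticePoint (g : Fin d → ℤ) : EuclideanSpace ℝ (Fin d) :=
  WithLp.toLp 2 fun i => (g i : ℝ)

@[simp] lemma latticePoint_apply (g : Fin d → ℤ) (i : Fin d) : latticePoint g i = g i :=
  rfl

lemma latticePoint_add (g h : Fin d → ℤ) :
    latticePoint (g + h) = latticePoint g + latticePoint h := by
  ext i; simp

lemma latticePoint_sub (g h : Fin d → ℤ) :
    latticePoint (g - h) = latticePoint g - latticePoint h := by
  ext i; simp

lemma inner_latticePoint (g : Fin d → ℤ) (v : EuclideanSpace ℝ (Fin d)) :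
    ⟪latticePoint g, v⟫ = ∑ i, (g i : ℝ) * v i := by
  simp [PiLp.inner_apply, mul_comm]

lemma mem_halfSpaceZ_iff {g : Fin d → ℤ} {v : EuclideanSpace ℝ (Fin d)} :
    g ∈ halfSpaceZ v ↔ ⟪latticePoint g, v⟫ < 0 := by
  rw [inner_latticePoint]; rfl

lemma tendsto_latticePoint_cofinite_cocompact :
    Tendsto (latticePoint (d := d)) cofinite (cocompact _) := by
  have h : Tendsto (fun (g : Fin d → ℤ) i => (g i : ℝ)) cofinite (cocompact _) := by
    simpa only [coprodᵢ_cofinite, coprodᵢ_cocompact] using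
      Tendsto.pi_map_coprodᵢ fun _ : Fin d => Int.tendsto_coe_cofinite
  exact (PiLp.homeomorph 2 _).symm.isClosedEmbedding.tendsto_cocompact.comp h

lemma tendsto_norm_latticePoint_sub (c : EuclideanSpace ℝ (Fin d)) :
    Tendsto (fun g => ‖latticePoint g - c‖) cofinite atTop :=
  tendsto_norm_cocompact_atTop.comp
    ((Homeomorph.subRight c).isClosedEmbedding.tendsto_cocompact.comp
      tendsto_latticePoint_cofinite_cocompact)

lemma finite_setOf_norm_latticePoint_sub_le (c : EuclideanSpace ℝ (Fin d)) (R : ℝ) :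
    {g | ‖latticePoint g - c‖ ≤ R}.Finite := by
  simpa using eventually_cofinite.mp ((tendsto_norm_latticePoint_sub c).eventually_gt_atTop R)

lemma exists_latticePoint_nearest {S : Set (Fin d → ℤ)} (hS : S.Nonempty)
    (c : EuclideanSpace ℝ (Fin d)) :
    ∃ t ∈ S, ∀ t' ∈ S, ‖latticePoint t - c‖ ≤ ‖latticePoint t' - c‖ := by
  have : Nonempty S := hS.to_subtype
  obtain ⟨⟨t, ht⟩, hmin⟩ := ((tendsto_norm_latticePoint_sub c).comp
    (Subtype.val_injective (p := (· ∈ S))).tendsto_cofinite).exists_forall_le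
  exact ⟨t, ht, fun t' ht' => hmin ⟨t', ht'⟩⟩

lemma exists_norm_latticePoint_sub_le (t : EuclideanSpace ℝ (Fin d)) :
    ∃ g, ‖latticePoint g - t‖ ≤ √d := by
  refine ⟨fun i => ⌊t i⌋, ?_⟩
  rw [EuclideanSpace.norm_eq]
  gcongr
  calc ∑ i, ‖(latticePoint (fun i => ⌊t i⌋) - t) i‖ ^ 2 ≤ ∑ _i : Fin d, (1 : ℝ) := by
        gcongr with i
        have h := Int.floor_le (t i)
        have h' := Int.lt_floor_add_one (t i)
        simp only [PiLp.sub_apply, latticePoint_apply, Real.norm_eq_abs, sq_abs]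
        nlinarith
    _ = d := by simp

lemma exists_inner_latticePoint_le {u : EuclideanSpace ℝ (Fin d)} (hu : ‖u‖ = 1)
    (R : ℝ) : ∃ s, ⟪latticePoint s, u⟫ ≤ R := by
  obtain ⟨s, hs⟩ := exists_norm_latticePoint_sub_le ((R - √d) • u)
  refine ⟨s, ?_⟩
  have hdev : ⟪latticePoint s - (R - √d) • u, u⟫ ≤ √d := by
    simpa [hu] using (real_inner_le_norm _ u).trans (by rw [hu, mul_one]; exact hs)
  rw [inner_sub_left, real_inner_smul_left, real_inner_self_eq_norm_sq, hu] at hdev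
  linarith

lemma exists_forall_ge_exists_norm_latticePoint_add_smul_le {S : Set (Fin d → ℤ)}
    (hS : S.Nonempty) {z : EuclideanSpace ℝ (Fin d)} (hz : ‖z‖ = 1) {a : ℝ}
    (hfacing : ∀ c, ∀ t ∈ S, (∀ t' ∈ S, ‖latticePoint t - c‖ ≤ ‖latticePoint t' - c‖) →
      a ≤ ‖latticePoint t - c‖ → ⟪latticePoint t - c, z⟫ ≤ -1) :
    ∃ s₀ : ℕ, ∀ s ≥ s₀, ∃ t ∈ S, ‖latticePoint t + (s : ℝ) • z‖ ≤ a + 1 := by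
  choose N hN hNmin using fun m : ℕ => exists_latticePoint_nearest hS (-((m : ℝ) • z))
  simp only [sub_neg_eq_add] at hNmin
  set r : ℕ → ℝ := fun m => ‖latticePoint (N m) + (m : ℝ) • z‖
  have hnext : ∀ m, r (m + 1) ≤ ‖latticePoint (N m) + (m : ℝ) • z + z‖ := fun m => by
    simpa [r, add_smul, add_assoc] using hNmin (m + 1) (N m) (hN m)
  obtain ⟨s₀, hs₀⟩ := exists_forall_ge_le_add_one_of_sq_descent (r := r) (a := a)
    (fun m => norm_nonneg _)
    (fun m hm => by
      have hface := hfacing (-((m : ℝ) • z)) (N m) (hN m) (by simpa using hNmin m) (by simpa)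
      have hsq := pow_le_pow_left₀ (norm_nonneg _) (hnext m) 2
      rw [norm_add_sq_real (latticePoint (N m) + (m : ℝ) • z), hz] at hsq
      rw [sub_neg_eq_add] at hface
      linarith)
    (fun m => (hnext m).trans ((norm_add_le _ _).trans (by rw [hz])))
  exact ⟨s₀, fun s hs => ⟨N s, hN s, hs₀ s hs⟩⟩

end Lattice

lemma exists_ne_dist_lt_of_compactSpace {X : Type*} [MetricSpace X] [CompactSpace X] {η : ℝ}
    (hη : 0 < η) : ∃ k : ℕ, ∀ f : Fin k → X, ∃ i j, i ≠ j ∧ dist (f i) (f j) < η := by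
  obtain ⟨t, -, htf, hcov⟩ := finite_cover_balls_of_compact (isCompact_univ (X := X)) (half_pos hη)
  refine ⟨htf.toFinset.card + 1, fun f => ?_⟩
  have hc : ∀ i, ∃ c ∈ htf.toFinset, dist (f i) c < η / 2 := fun i => by
    simpa using hcov (Set.mem_univ (f i))
  choose c hct hfc using hc
  obtain ⟨i, -, j, -, hij, hcij⟩ := Finset.exists_ne_map_eq_of_card_lt_of_maps_to
    (s := Finset.univ) (by simp) (fun i _ => hct i)
  refine ⟨i, j, hij, ?_⟩
  have hi := hfc i
  rw [hcij] at hi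
  linarith [hfc j, dist_triangle_right (f i) (f j) (c j)]

lemma exists_embedding_fiber_of_not_boundedToOne {X Y : Type*} {π : X → Y}
    (hπ : ¬ BoundedToOne π) (k : ℕ) : ∃ (y : Y) (x : Fin k ↪ X), ∀ i, π (x i) = y := by
  simp only [BoundedToOne, not_exists, not_forall, not_le] at hπ
  obtain ⟨y, s, hs, hk⟩ := hπ k
  exact ⟨y, (Fin.castLEEmb hk.le).trans (s.equivFin.symm.toEmbedding.trans (.subtype _)),
    fun i => hs _ (Subtype.prop _)⟩

section Dynamics

variable {d : ℕ} {X Y : Type*} [MetricSpace X]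

def closeSet (T : (Fin d → ℤ) → X → X) (ε : ℝ) (x y : X) : Set (Fin d → ℤ) :=
  {g | dist (T g x) (T g y) ≤ ε}

-- `ε`-separation at the origin is what keeps limits of witnesses distinct.
def ndWitnesses (T : (Fin d → ℤ) → X → X) (π : X → Y) (ε : ℝ) (D : Set (Fin d → ℤ)) :
    Set (X × X × EuclideanSpace ℝ (Fin d)) :=
  {p | π p.1 = π p.2.1 ∧ ε ≤ dist p.1 p.2.1 ∧ ‖p.2.2‖ = 1 ∧
    ∀ g ∈ D, ⟪latticePoint g, p.2.2⟫ < -1 → g ∈ closeSet T ε p.1 p.2.1}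

variable {T : (Fin d → ℤ) → X → X} {π : X → Y} {ε : ℝ}

lemma mem_closeSet_apply_iff (hTadd : ∀ (g h : Fin d → ℤ) (x : X), T g (T h x) = T (g + h) x)
    {g t : Fin d → ℤ} {x y : X} :
    g ∈ closeSet T ε (T t x) (T t y) ↔ g + t ∈ closeSet T ε x y := by
  simp only [closeSet, Set.mem_ofPred_eq, hTadd]

lemma NDl2_mono {ε' : ℝ} (h : ε ≤ ε') : NDl2 T π ε ⊆ NDl2 T π ε' :=
  fun _ ⟨hv, x, y, hxy, hπ, hclose⟩ => ⟨hv, x, y, hxy, hπ, fun g hg => (hclose g hg).trans h⟩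

lemma ndWitnesses_anti {D D' : Set (Fin d → ℤ)} (h : D ⊆ D') :
    ndWitnesses T π ε D' ⊆ ndWitnesses T π ε D :=
  fun _ ⟨hπ, hsep, hu, hclose⟩ => ⟨hπ, hsep, hu, fun g hg => hclose g (h hg)⟩

lemma isCompact_ndWitnesses [CompactSpace X] [TopologicalSpace Y] [T2Space Y]
    (hTc : ∀ g, Continuous (T g)) (hπc : Continuous π) (D : Set (Fin d → ℤ)) :
    IsCompact (ndWitnesses T π ε D) := by
  refine (isCompact_univ.prod (isCompact_univ.prod (isCompact_sphere 0 1))).of_isClosed_subset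
    ?_ fun p hp => ⟨trivial, trivial, by simpa using hp.2.2.1⟩
  simp only [ndWitnesses, closeSet, Set.ofPred_and, Set.ofPred_forall, Set.mem_ofPred_eq]
  refine .inter ?_ (.inter ?_ (.inter ?_ (isClosed_iInter fun g => isClosed_iInter fun _ =>
    isClosed_imp ?_ ?_)))
  · exact isClosed_eq (by fun_prop) (by fun_prop)
  · exact isClosed_le (by fun_prop) (by fun_prop)
  · exact isClosed_eq (by fun_prop) (by fun_prop)
  · exact isOpen_lt (by fun_prop) continuous_const
  · exact isClosed_le (by fun_prop) continuous_const

lemma mem_NDl2_of_mem_ndWitnesses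
    (hTadd : ∀ (g h : Fin d → ℤ) (x : X), T g (T h x) = T (g + h) x)
    (hTzero : ∀ x : X, T 0 x = x)
    (hπfib : ∀ (g : Fin d → ℤ) (x y : X), π x = π y → π (T g x) = π (T g y)) (hε : 0 < ε)
    {x y : X} {u : EuclideanSpace ℝ (Fin d)} (hp : (x, y, u) ∈ ndWitnesses T π ε Set.univ) :
    u ∈ NDl2 T π ε := by
  obtain ⟨hπ, hsep, hu, hclose⟩ := hp
  obtain ⟨s, hs⟩ := exists_inner_latticePoint_le hu (-1)
  refine ⟨hu, T s x, T s y, fun h => ?_, hπfib s x y hπ, fun g hg => ?_⟩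
  · have hxy := congrArg (T (-s)) h
    rw [hTadd, hTadd, neg_add_cancel, hTzero, hTzero] at hxy
    rw [hxy, dist_self] at hsep
    linarith
  · refine (mem_closeSet_apply_iff hTadd).2 (hclose _ trivial ?_)
    rw [latticePoint_add, inner_add_left]
    linarith [mem_halfSpaceZ_iff.1 hg]

lemma exists_mem_ndWitnesses_of_mem_NDl2
    (hTadd : ∀ (g h : Fin d → ℤ) (x : X), T g (T h x) = T (g + h) x)
    (hπfib : ∀ (g : Fin d → ℤ) (x y : X), π x = π y → π (T g x) = π (T g y))
    (hnoClosePair : ∀ x y, x ≠ y → π x = π y → closeSet T ε x y ≠ Set.univ)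
    {v : EuclideanSpace ℝ (Fin d)} (hv : v ∈ NDl2 T π ε) :
    ∃ x y, (x, y, v) ∈ ndWitnesses T π ε Set.univ := by
  obtain ⟨hv, x, y, hxy, hπ, hclose⟩ := hv
  set A := (fun g => ⟪latticePoint g, v⟫) '' (closeSet T ε x y)ᶜ
  have hA : A.Nonempty := (Set.nonempty_compl.2 (hnoClosePair x y hxy hπ)).image _
  have hA0 : ∀ a ∈ A, 0 ≤ a := by
    rintro _ ⟨g, hg, rfl⟩
    by_contra! h
    exact hg (hclose g (mem_halfSpaceZ_iff.2 h))
  -- `t` is a separation time nearly minimising `⟪·, v⟫`; shifting to it leaves no separation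
  -- time beyond `⟪·, v⟫ = -1`.
  obtain ⟨_, ⟨t, ht, rfl⟩, htA⟩ := Real.lt_sInf_add_pos hA one_pos
  have hsep : ε < dist (T t x) (T t y) := not_le.1 ht
  refine ⟨T t x, T t y, hπfib t x y hπ, hsep.le, hv, fun g _ hg => ?_⟩
  rw [mem_closeSet_apply_iff hTadd]
  by_contra hgt
  have hinf := csInf_le ⟨0, hA0⟩ ⟨g + t, hgt, rfl⟩
  simp only [latticePoint_add, inner_add_left] at hinf htA
  linarith

lemma isClosed_NDl2 [CompactSpace X] [TopologicalSpace Y] [T2Space Y]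
    (hTc : ∀ g, Continuous (T g))
    (hTadd : ∀ (g h : Fin d → ℤ) (x : X), T g (T h x) = T (g + h) x)
    (hTzero : ∀ x : X, T 0 x = x) (hπc : Continuous π)
    (hπfib : ∀ (g : Fin d → ℤ) (x y : X), π x = π y → π (T g x) = π (T g y)) (hε : 0 < ε) :
    IsClosed (NDl2 T π ε) := by
  rcases em (∃ x y, x ≠ y ∧ π x = π y ∧ closeSet T ε x y = Set.univ) with
    ⟨x, y, hxy, hπ, hclose⟩ | hnoClosePair
  · have hND : NDl2 T π ε = sphere 0 1 := by
      ext v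
      refine ⟨fun hv => by simpa using hv.1, fun hv => ⟨by simpa using hv, x, y, hxy, hπ, ?_⟩⟩
      exact fun g _ => (Set.eq_univ_iff_forall.1 hclose g : g ∈ closeSet T ε x y)
    rw [hND]
    exact isClosed_sphere
  push Not at hnoClosePair
  have hND : NDl2 T π ε = (fun p => p.2.2) '' ndWitnesses T π ε Set.univ := by
    ext v
    refine ⟨fun hv => ?_, ?_⟩
    · obtain ⟨x, y, hp⟩ := exists_mem_ndWitnesses_of_mem_NDl2 hTadd hπfib hnoClosePair hv
      exact ⟨(x, y, v), hp, rfl⟩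
    · rintro ⟨⟨x, y, u⟩, hp, rfl⟩
      exact mem_NDl2_of_mem_ndWitnesses hTadd hTzero hπfib hε hp
  rw [hND]
  exact ((isCompact_ndWitnesses hTc hπc Set.univ).image (by fun_prop)).isClosed

lemma mem_ndWitnesses_of_isNearest
    (hTadd : ∀ (g h : Fin d → ℤ) (x : X), T g (T h x) = T (g + h) x)
    (hπfib : ∀ (g : Fin d → ℤ) (x y : X), π x = π y → π (T g x) = π (T g y))
    {x y : X} (hπ : π x = π y) {c : EuclideanSpace ℝ (Fin d)} {t : Fin d → ℤ}
    (ht : t ∉ closeSet T ε x y)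
    (hnear : ∀ t' ∉ closeSet T ε x y, ‖latticePoint t - c‖ ≤ ‖latticePoint t' - c‖)
    (hρ : 0 < ‖latticePoint t - c‖) :
    (T t x, T t y, ‖latticePoint t - c‖⁻¹ • (latticePoint t - c)) ∈
      ndWitnesses T π ε {g | ‖latticePoint g‖ ^ 2 < 2 * ‖latticePoint t - c‖} := by
  set w := latticePoint t - c
  have hsep : ε < dist (T t x) (T t y) := not_le.1 ht
  refine ⟨hπfib t x y hπ, hsep.le, norm_smul_inv_norm (norm_pos_iff.1 hρ), ?_⟩
  intro g hg hgu
  rw [mem_closeSet_apply_iff hTadd]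
  by_contra hgt
  have hgw : ⟪latticePoint g, w⟫ ≤ -‖w‖ := by
    rw [real_inner_smul_right, inv_mul_lt_iff₀ hρ] at hgu
    linarith
  have hfar := hnear _ hgt
  rw [latticePoint_add, add_sub_assoc] at hfar
  exact (norm_add_lt_norm_of_inner_le hgw hg).not_ge hfar

lemma exists_fiber_family_subset_closeSet [CompactSpace X] (hTc : ∀ g, Continuous (T g))
    (hTadd : ∀ (g h : Fin d → ℤ) (x : X), T g (T h x) = T (g + h) x)
    (hπnb : ¬ BoundedToOne π) (hε : 0 < ε) (Λ : ℝ) :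
    ∃ (k : ℕ) (x : Fin k ↪ X) (y : Y), (∀ i, π (x i) = y) ∧
      ∀ c : EuclideanSpace ℝ (Fin d), ∃ i j, i ≠ j ∧
        {g | ‖latticePoint g - c‖ ≤ Λ} ⊆ closeSet T ε (x i) (x j) := by
  set F := (finite_setOf_norm_latticePoint_sub_le 0 (Λ + √d)).toFinset
  have huc : UniformContinuous fun (p : X) (g : F) => T g p :=
    CompactSpace.uniformContinuous_of_continuous (continuous_pi fun g => hTc g.1)
  obtain ⟨η, hη, hmod⟩ := Metric.uniformContinuous_iff.1 huc ε hε
  obtain ⟨k, hk⟩ := exists_ne_dist_lt_of_compactSpace (X := X) hη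
  obtain ⟨y, x, hx⟩ := exists_embedding_fiber_of_not_boundedToOne hπnb k
  refine ⟨k, x, y, hx, fun c => ?_⟩
  obtain ⟨g₀, hg₀⟩ := exists_norm_latticePoint_sub_le c
  obtain ⟨i, j, hij, hclose⟩ := hk fun i => T g₀ (x i)
  refine ⟨i, j, hij, fun g hg => ?_⟩
  have hgF : g - g₀ ∈ F := by
    rw [Set.Finite.mem_toFinset, Set.mem_ofPred_eq, sub_zero, latticePoint_sub,
      ← sub_sub_sub_cancel_right _ _ c]
    exact (norm_sub_le _ _).trans (add_le_add hg hg₀)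
  have hdist := (dist_le_pi_dist _ _ ⟨g - g₀, hgF⟩).trans_lt (hmod hclose)
  rw [hTadd, hTadd, sub_add_cancel] at hdist
  exact hdist.le

lemma exists_mem_ndWitnesses_inner_ge [CompactSpace X] (hTc : ∀ g, Continuous (T g))
    (hTadd : ∀ (g h : Fin d → ℤ) (x : X), T g (T h x) = T (g + h) x)
    (hπfib : ∀ (g : Fin d → ℤ) (x y : X), π x = π y → π (T g x) = π (T g y))
    (hπnb : ¬ BoundedToOne π) (hε : 0 < ε)
    (hnoClosePair : ∀ x y, x ≠ y → π x = π y → closeSet T ε x y ≠ Set.univ)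
    {z : EuclideanSpace ℝ (Fin d)} (hz : ‖z‖ = 1) {Λ : ℝ} (hΛ : 2 ≤ Λ) :
    ∃ p ∈ ndWitnesses T π ε {g | ‖latticePoint g‖ ^ 2 < Λ}, -2 / Λ ≤ ⟪p.2.2, z⟫ := by
  obtain ⟨k, x, y, hx, hpack⟩ := exists_fiber_family_subset_closeSet hTc hTadd hπnb hε Λ
  have hπx : ∀ i j, π (x i) = π (x j) := fun i j => (hx i).trans (hx j).symm
  obtain ⟨i, j, c, t, ht, hnear, hfar, hface⟩ : ∃ i j c, ∃ t ∈ (closeSet T ε (x i) (x j))ᶜ,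
      (∀ t' ∈ (closeSet T ε (x i) (x j))ᶜ, ‖latticePoint t - c‖ ≤ ‖latticePoint t' - c‖) ∧
      Λ / 2 ≤ ‖latticePoint t - c‖ ∧ -1 < ⟪latticePoint t - c, z⟫ := by
    by_contra! hfacing
    -- Otherwise, for every pair, points of separation come within `Λ` of all far enough
    -- points of the ray `s ↦ -s • z`, and `hpack` fails there.
    have hray : ∀ p : Fin k × Fin k, ∃ s₀ : ℕ, p.1 ≠ p.2 → ∀ s ≥ s₀,
        ∃ t ∈ (closeSet T ε (x p.1) (x p.2))ᶜ, ‖latticePoint t + (s : ℝ) • z‖ ≤ Λ / 2 + 1 := by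
      intro p
      by_cases hp : p.1 = p.2
      · exact ⟨0, fun h => (h hp).elim⟩
      obtain ⟨s₀, hs₀⟩ := exists_forall_ge_exists_norm_latticePoint_add_smul_le
        (Set.nonempty_compl.2 (hnoClosePair _ _ (x.injective.ne hp) (hπx _ _))) hz (hfacing _ _)
      exact ⟨s₀, fun _ => hs₀⟩
    choose s₀ hs₀ using hray
    set s := Finset.univ.sup s₀
    obtain ⟨i, j, hij, hclose⟩ := hpack (-((s : ℝ) • z))
    obtain ⟨t, ht, hts⟩ := hs₀ (i, j) hij s (Finset.le_sup (Finset.mem_univ _))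
    exact ht (hclose (by rw [Set.mem_ofPred_eq, sub_neg_eq_add]; linarith))
  have hρ : 0 < ‖latticePoint t - c‖ := by linarith
  refine ⟨_, ndWitnesses_anti (fun g hg => ?_)
    (mem_ndWitnesses_of_isNearest hTadd hπfib (hπx i j) ht hnear hρ), ?_⟩
  · exact (show ‖latticePoint g‖ ^ 2 < Λ from hg).trans_le (by linarith)
  · rw [real_inner_smul_left]
    have hinv : ‖latticePoint t - c‖⁻¹ ≤ 2 / Λ := by
      rw [inv_le_comm₀ hρ (by positivity), inv_div]
      exact hfar
    have hmul := mul_le_mul_of_nonneg_left hface.le (inv_nonneg.2 hρ.le)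
    rw [neg_div]
    linarith

lemma exists_mem_NDl2_inner_nonneg [CompactSpace X] [TopologicalSpace Y] [T2Space Y]
    (hTc : ∀ g, Continuous (T g))
    (hTadd : ∀ (g h : Fin d → ℤ) (x : X), T g (T h x) = T (g + h) x)
    (hTzero : ∀ x : X, T 0 x = x) (hπc : Continuous π)
    (hπfib : ∀ (g : Fin d → ℤ) (x y : X), π x = π y → π (T g x) = π (T g y))
    (hπnb : ¬ BoundedToOne π) (hε : 0 < ε) {z : EuclideanSpace ℝ (Fin d)} (hz : ‖z‖ = 1) :
    ∃ v ∈ NDl2 T π ε, 0 ≤ ⟪v, z⟫ := by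
  rcases em (∃ x y, x ≠ y ∧ π x = π y ∧ closeSet T ε x y = Set.univ) with
    ⟨x, y, hxy, hπ, hclose⟩ | hnoClosePair
  · refine ⟨z, ⟨hz, x, y, hxy, hπ, fun g _ => ?_⟩, by simp [hz]⟩
    exact (Set.eq_univ_iff_forall.1 hclose g : g ∈ closeSet T ε x y)
  push Not at hnoClosePair
  set K : ℕ → Set (X × X × EuclideanSpace ℝ (Fin d)) := fun n =>
    ndWitnesses T π ε {g | ‖latticePoint g‖ ^ 2 < n + 2} ∩ {p | -2 / (n + 2) ≤ ⟪p.2.2, z⟫}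
  have hKcl : ∀ n, IsClosed (K n) := fun n =>
    (isCompact_ndWitnesses hTc hπc _).isClosed.inter (isClosed_le continuous_const (by fun_prop))
  have hKanti : ∀ n, K (n + 1) ⊆ K n := by
    refine fun n => Set.inter_subset_inter (ndWitnesses_anti fun g hg => ?_) fun p hp => ?_
    · simp only [Set.mem_ofPred_eq, Nat.cast_succ] at hg ⊢
      linarith
    · simp only [Set.mem_ofPred_eq, Nat.cast_succ] at hp ⊢
      refine le_trans ?_ hp
      rw [neg_div, neg_div, neg_le_neg_iff]
      gcongr
      linarith
  obtain ⟨⟨x, y, v⟩, hK⟩ := IsCompact.nonempty_iInter_of_sequence_nonempty_isCompact_isClosed K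
    hKanti (fun n => exists_mem_ndWitnesses_inner_ge hTc hTadd hπfib hπnb hε hnoClosePair hz
      (by linarith [n.cast_nonneg (α := ℝ)]))
    ((isCompact_ndWitnesses hTc hπc _).of_isClosed_subset (hKcl 0) Set.inter_subset_left) hKcl
  simp only [Set.mem_iInter] at hK
  obtain ⟨hπ, hsep, hv, -⟩ := (hK 0).1
  refine ⟨v, mem_NDl2_of_mem_ndWitnesses hTadd hTzero hπfib hε ⟨hπ, hsep, hv, fun g _ => ?_⟩, ?_⟩
  · obtain ⟨n, hn⟩ := exists_nat_gt (‖latticePoint g‖ ^ 2)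
    exact (hK n).1.2.2.2 g (show ‖latticePoint g‖ ^ 2 < n + 2 by linarith)
  · refine le_of_tendsto' (x := atTop) (f := fun n : ℕ => -2 / ((n : ℝ) + 2)) ?_ fun n => (hK n).2
    simpa using tendsto_const_nhds.div_atTop
      (tendsto_atTop_add_const_right _ (2 : ℝ) tendsto_natCast_atTop_atTop)

end Dynamics

theorem closed_half_space_contains_nondeterministic_vector_general
    {d : ℕ} {X Y : Type*} [MetricSpace X] [CompactSpace X] [MetricSpace Y]
    (T : (Fin d → ℤ) → X → X)
    (hTc : ∀ g, Continuous (T g))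
    (hTadd : ∀ (g h : Fin d → ℤ) (x : X), T g (T h x) = T (g + h) x)
    (hTzero : ∀ x : X, T 0 x = x)
    (S : (Fin d → ℤ) → Y → Y)
    (π : X → Y) (hπc : Continuous π)
    (hπeq : ∀ (g : Fin d → ℤ) (x : X), π (T g x) = S g (π x))
    (hπnb : ¬ BoundedToOne π) :
    ∀ c : EuclideanSpace ℝ (Fin d), c ≠ 0 →
      ∃ v ∈ ⋂ ε > (0 : ℝ), NDl2 T π ε, 0 ≤ ∑ i, v i * c i := by
  intro c hc
  have hπfib : ∀ (g : Fin d → ℤ) (x y : X), π x = π y → π (T g x) = π (T g y) :=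
    fun g x y h => by rw [hπeq, hπeq, h]
  have hεn : ∀ n : ℕ, (0 : ℝ) < 1 / (n + 1) := fun n => Nat.one_div_pos_of_nat
  set z := ‖c‖⁻¹ • c
  set K : ℕ → Set (EuclideanSpace ℝ (Fin d)) := fun n =>
    NDl2 T π (1 / (n + 1)) ∩ {v | 0 ≤ ⟪v, z⟫}
  have hKcl : ∀ n, IsClosed (K n) := fun n =>
    (isClosed_NDl2 hTc hTadd hTzero hπc hπfib (hεn n)).inter
      (isClosed_le continuous_const (by fun_prop))
  obtain ⟨v, hv⟩ := IsCompact.nonempty_iInter_of_sequence_nonempty_isCompact_isClosed K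
    (fun n => Set.inter_subset_inter_left _ (NDl2_mono (Nat.one_div_le_one_div n.le_succ)))
    (fun n => exists_mem_NDl2_inner_nonneg hTc hTadd hTzero hπc hπfib hπnb (hεn n)
      (norm_smul_inv_norm hc))
    ((isCompact_sphere 0 1).of_isClosed_subset (hKcl 0) fun v hv => by simpa using hv.1.1) hKcl
  simp only [Set.mem_iInter] at hv
  refine ⟨v, Set.mem_iInter₂.2 fun ε hε => ?_, ?_⟩
  · obtain ⟨n, hn⟩ := exists_nat_one_div_lt hε
    exact NDl2_mono hn.le (hv n).1
  · have hvc : 0 ≤ ⟪v, c⟫ := by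
      have hvz := (hv 0).2
      rwa [Set.mem_ofPred_eq, real_inner_smul_right,
        mul_nonneg_iff_of_pos_left (inv_pos.2 (norm_pos_iff.2 hc))] at hvz
    simpa [PiLp.inner_apply, mul_comm] using hvc

/-- If `π` is not bounded to one, every closed half-space `{x : ⟨x,c⟩ ≥ 0}` of `ℝ^d`
contains a `π`-nondeterministic vector. -/
theorem closed_half_space_contains_nondeterministic_vector
    {d : ℕ} {X Y : Type*} [MetricSpace X] [CompactSpace X] [MetricSpace Y] [CompactSpace Y]
    (T : (Fin d → ℤ) → X → X)
    (hTc : ∀ g, Continuous (T g))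
    (hTadd : ∀ (g h : Fin d → ℤ) (x : X), T g (T h x) = T (g + h) x)
    (hTzero : ∀ x : X, T 0 x = x)
    (S : (Fin d → ℤ) → Y → Y)
    (hSc : ∀ g, Continuous (S g))
    (hSadd : ∀ (g h : Fin d → ℤ) (y : Y), S g (S h y) = S (g + h) y)
    (hSzero : ∀ y : Y, S 0 y = y)
    (π : X → Y) (hπc : Continuous π) (hπs : Function.Surjective π)
    (hπeq : ∀ (g : Fin d → ℤ) (x : X), π (T g x) = S g (π x))
    (hπnb : ¬ BoundedToOne π) :
    ∀ c : EuclideanSpace ℝ (Fin d), c ≠ 0 →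
      ∃ v ∈ ⋂ ε > (0 : ℝ), NDl2 T π ε, 0 ≤ ∑ i, v i * c i :=
  closed_half_space_contains_nondeterministic_vector_general T hTc hTadd hTzero S π hπc hπeq hπnb
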